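/- arXiv:1806.10358 — 2 statements merged into one kernel-verified Lean document; each statement's English description precedes it below -/
import Mathlib

section
/- For every slice-torus link invariant ν, the value of ν on the positive Hopf link is 1 and the value on the negative Hopf link is 0. -/
/-- An abstract framework for (isotopy classes of) oriented links in `S³`, together with
the operations, relations and numerical invariants used in the theory of
slice-torus link invariants. -/
structure LinkTheory where
  /-- The set of (isotopy classes of) oriented links in `S³`. -/
  Link : Type
  /-- The number of components of a link. -/
  comp : Link → ℕ
  comp_pos : ∀ L, 0 < comp L
  /-- Strong concordance of links. -/
  StrongConc : Link → Link → Prop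
  /-- `BandMove L₁ L₂`: `L₁` and `L₂` are related by an oriented band move and `L₁`
  has one component less than `L₂`. -/
  BandMove : Link → Link → Prop
  bandMove_comp : ∀ {L₁ L₂}, BandMove L₁ L₂ → comp L₁ + 1 = comp L₂
  /-- Disjoint (split) union of links. -/
  disjUnion : Link → Link → Link
  comp_disjUnion : ∀ L₁ L₂, comp (disjUnion L₁ L₂) = comp L₁ + comp L₂
  /-- The mirror image with reversed orientation, `-L*`. -/
  mirrorRev : Link → Link
  comp_mirrorRev : ∀ L, comp (mirrorRev L) = comp L
  /-- The coherently oriented torus link `T(m,n)` (the positive torus link when `m, n > 0`). -/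
  torusLink : ℤ → ℤ → Link
  comp_torusLink : ∀ m n : ℤ, 0 < m → 0 < n → comp (torusLink m n) = m.gcd n
  /-- The unknot, i.e. the torus knot `T(1,1)`. -/
  unknot : Link
  unknot_eq : unknot = torusLink 1 1
  /-- The unlink with `n` components. -/
  unlink : ℕ → Link
  comp_unlink : ∀ n, 0 < n → comp (unlink n) = n
  unlink_one : unlink 1 = unknot
  /-- Connected sum (of knots, or of links along chosen components). -/
  connSum : Link → Link → Link
  comp_connSum : ∀ K₁ K₂, comp K₁ = 1 → comp K₂ = 1 → comp (connSum K₁ K₂) = 1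
  /-- A connected sum is obtained from the disjoint union by a single oriented band move. -/
  bandMove_connSum : ∀ K₁ K₂, BandMove (connSum K₁ K₂) (disjUnion K₁ K₂)
  /-- `-(K₁ # K₂)* = (-K₁*) # (-K₂*)` for knots. -/
  mirrorRev_connSum : ∀ K₁ K₂, comp K₁ = 1 → comp K₂ = 1 →
    mirrorRev (connSum K₁ K₂) = connSum (mirrorRev K₁) (mirrorRev K₂)
  /-- `CC L L'`: `L` and `L'` admit diagrams differing by a single crossing change. -/
  CC : Link → Link → Prop
  /-- `CCinter L L'`: `L` and `L'` admit diagrams differing by a single crossing change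
  between two *different* components. -/
  CCinter : Link → Link → Prop
  CCinter_CC : ∀ {L L'}, CCinter L L' → CC L L'
  /-- `CCpos L₊ L₋`: `L₋` is represented by a diagram obtained from a diagram of `L₊` by
  replacing a positive crossing with a negative one. -/
  CCpos : Link → Link → Prop
  CCpos_CC : ∀ {L L'}, CCpos L L' → CC L L'
  /-- The (weak) slice genus `g₄`. -/
  genus4 : Link → ℕ
  /-- The Seifert genus `g₃`. -/
  genus3 : Link → ℕ
  genus4_mirrorRev : ∀ L, genus4 (mirrorRev L) = genus4 L
  genus3_mirrorRev : ∀ L, genus3 (mirrorRev L) = genus3 L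
  /-- `Cob L₀ L₁ g k`: there is a cobordism in `S³ × [0,1]` from `L₀` to `L₁` of genus `g`
  with `k` connected components, each connected component of which has boundary on both
  links. -/
  Cob : Link → Link → ℕ → ℕ → Prop
  /-- Removing a small disk from a genus-minimizing connected surface in `D⁴` bounding `L`
  yields a connected cobordism from `L` to the unknot of genus `g₄(L)`. -/
  cob_genus4 : ∀ L, Cob L unknot (genus4 L) 1
  /-- The list of the components of a link, each of which is a knot. -/
  componentKnots : Link → List Link
  componentKnots_length : ∀ L, (componentKnots L).length = comp L
  componentKnots_knot : ∀ L K, K ∈ componentKnots L → comp K = 1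
  /-- The positively clasped, fully clasped, `m`-twisted Whitehead double `W₊(L, m)`. -/
  wPos : (L : Link) → (Fin (comp L) → ℤ) → Link
  /-- The negatively clasped, fully clasped, `m`-twisted Whitehead double `W₋(L, m)`. -/
  wNeg : (L : Link) → (Fin (comp L) → ℤ) → Link
  comp_wPos : ∀ L m, comp (wPos L m) = comp L
  comp_wNeg : ∀ L m, comp (wNeg L m) = comp L
  /-- Oriented link diagrams. -/
  Diagram : Type
  /-- The link represented by a diagram. -/
  diagOf : Diagram → Link
  /-- The number of crossings `n(D)`. -/
  nC : Diagram → ℕ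
  /-- The number of positive crossings `n₊(D)`. -/
  nP : Diagram → ℕ
  /-- The number of negative crossings `n₋(D)`. -/
  nN : Diagram → ℕ
  nC_eq : ∀ D, nC D = nP D + nN D
  /-- The writhe `w(D)`. -/
  writhe : Diagram → ℤ
  writhe_eq : ∀ D, writhe D = (nP D : ℤ) - (nN D : ℤ)
  /-- The number of Seifert circles `O(D)`. -/
  circles : Diagram → ℕ
  /-- `s₊(D)`: the number of connected components of the Seifert graph of `D` after
  removing all negative edges. -/
  sPlus : Diagram → ℕ
  /-- A diagram is non-splittable if its number of connected components equals the number
  of split components of the link it represents. -/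
  NonSplittable : Diagram → Prop
  /-- The number of split components `ℓₛ` of a link. -/
  splitComps : Link → ℕ
  /-- `QPClosure L d b`: `L` is the closure of a quasi-positive braid on `d` strands which
  is a product of `b` conjugates of positive Artin generators. -/
  QPClosure : Link → ℕ → ℕ → Prop
  /-- Legendrian representatives of a link in `(S³, ξ_st)`. -/
  Leg : Link → Type
  /-- The Thurston–Bennequin numbers of the components of a Legendrian link. -/
  tb : {L : Link} → Leg L → Fin (comp L) → ℤ

namespace LinkTheory

/-- A link is strongly slice if it is strongly concordant to an unlink. -/
def StronglySlice (T : LinkTheory) (L : T.Link) : Prop :=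
  T.StrongConc L (T.unlink (T.comp L))

end LinkTheory

/-- A slice-torus link invariant: an `ℝ`-valued strong concordance invariant of oriented
links satisfying properties (A)–(D). -/
structure SliceTorus (T : LinkTheory) where
  /-- The underlying real-valued link invariant. -/
  ν : T.Link → ℝ
  /-- `ν` is a strong concordance invariant. -/
  conc : ∀ {L₁ L₂}, T.StrongConc L₁ L₂ → ν L₁ = ν L₂
  /-- Property (A): behaviour under oriented band moves. -/
  band : ∀ {L₁ L₂}, T.BandMove L₁ L₂ → ν L₂ - 1 ≤ ν L₁ ∧ ν L₁ ≤ ν L₂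
  /-- Property (B): additivity under disjoint union. -/
  add : ∀ L₁ L₂, ν (T.disjUnion L₁ L₂) = ν L₁ + ν L₂
  /-- Property (C): `0 ≤ ν(L) + ν(-L*) ≤ ℓ - 1`. -/
  mirror : ∀ L, 0 ≤ ν L + ν (T.mirrorRev L) ∧ ν L + ν (T.mirrorRev L) ≤ (T.comp L : ℝ) - 1
  /-- Property (D): normalization on positive torus knots. -/
  torus : ∀ p q : ℤ, 0 < p → 0 < q → IsCoprime p q →
    ν (T.torusLink p q) = ((p : ℝ) - 1) * ((q : ℝ) - 1) / 2

/-! Axiom (D) gives `ν(T(2,3)) = 1` and `ν(unknot) = 0`, and axiom (C) for a knot forces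
`ν(-K*) = -ν(K)`. Each Hopf link `H` is reached by band moves from two knots whose `ν` values
differ by one, so axiom (A) squeezes `ν(H)` to the larger of the two. -/

namespace LinkTheory

theorem comp_torusLink_two_three (T : LinkTheory) : T.comp (T.torusLink 2 3) = 1 :=
  T.comp_torusLink 2 3 (by norm_num) (by norm_num)

end LinkTheory

namespace SliceTorus

variable {T : LinkTheory} (st : SliceTorus T)

theorem nu_unknot : st.ν T.unknot = 0 := by
  rw [T.unknot_eq, st.torus 1 1 one_pos one_pos isCoprime_one_left]
  norm_num

theorem nu_torusLink_two_three : st.ν (T.torusLink 2 3) = 1 := by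
  rw [st.torus 2 3 (by norm_num) (by norm_num) (by norm_num)]
  norm_num

theorem nu_mirrorRev_of_comp_eq_one {K : T.Link} (hK : T.comp K = 1) :
    st.ν (T.mirrorRev K) = -st.ν K := by
  have h := st.mirror K
  rw [hK, Nat.cast_one, sub_self] at h
  linarith [h.1, h.2]

theorem nu_eq_of_bandMove_of_bandMove {K J L : T.Link} (hK : T.BandMove K L)
    (hJ : T.BandMove J L) (hKJ : st.ν K = st.ν J + 1) : st.ν L = st.ν K := by
  have hKL := (st.band hK).2
  have hJL := (st.band hJ).1
  linarith

end SliceTorus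

/-- For every slice-torus link invariant `ν`, the value of `ν` on the positive Hopf link
is `1` and on the negative Hopf link is `0`.  Here the positive Hopf link is obtained by
a single oriented band move from both the positive trefoil `T(2,3)` and the unknot, and
the negative Hopf link from both the left-handed trefoil `T(2,3)* = -T(2,3)*` and the
unknot. -/
theorem nu_hopf (T : LinkTheory) (st : SliceTorus T) (Hplus Hminus : T.Link)
    (hp1 : T.BandMove (T.torusLink 2 3) Hplus)
    (hp2 : T.BandMove T.unknot Hplus)
    (hm1 : T.BandMove (T.mirrorRev (T.torusLink 2 3)) Hminus)
    (hm2 : T.BandMove T.unknot Hminus) :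
    st.ν Hplus = 1 ∧ st.ν Hminus = 0 := by
  have hT := st.nu_torusLink_two_three
  have hU := st.nu_unknot
  have hM : st.ν (T.mirrorRev (T.torusLink 2 3)) = -1 := by
    rw [st.nu_mirrorRev_of_comp_eq_one T.comp_torusLink_two_three, hT]
  constructor
  · rw [st.nu_eq_of_bandMove_of_bandMove hp1 hp2 (by rw [hT, hU]; norm_num), hT]
  · rw [st.nu_eq_of_bandMove_of_bandMove hm2 hm1 (by rw [hU, hM]; norm_num), hU]
end

section
/- Every slice-torus link invariant is additive under connected sum of knots: ν(K1 # K2) = ν(K1) + ν(K2) for all oriented knots K1, K2. -/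
/-- Every slice-torus link invariant is additive under connected sum of knots. -/
theorem nu_connSum_knots (T : LinkTheory) (st : SliceTorus T) :
    ∀ K₁ K₂ : T.Link, T.comp K₁ = 1 → T.comp K₂ = 1 →
      st.ν (T.connSum K₁ K₂) = st.ν K₁ + st.ν K₂ := by
  intro K₁ K₂ h₁ h₂
  have hm : ∀ K : T.Link, T.comp K = 1 → st.ν (T.mirrorRev K) = -st.ν K := by
    intro K hK
    have := st.mirror K
    rw [hK] at this
    push_cast at this
    linarith [this.1, this.2]
  have hb := st.band (T.bandMove_connSum K₁ K₂)
  rw [st.add] at hb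
  have hb' := st.band (T.bandMove_connSum (T.mirrorRev K₁) (T.mirrorRev K₂))
  rw [st.add, ← T.mirrorRev_connSum K₁ K₂ h₁ h₂,
    hm _ (T.comp_connSum K₁ K₂ h₁ h₂), hm K₁ h₁, hm K₂ h₂] at hb'
  linarith [hb.1, hb.2, hb'.1, hb'.2]
end
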